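/- arXiv:1704.00690 — 3 statements merged into one kernel-verified Lean document; each statement's English description precedes it below -/
import Mathlib

section
/- There exists a binary vector z ∈ F_2^n such that q(x) = 2·(z^T x) for all x ∈ L_q, where z^T x = Σ_{α=1}^n z_α x_α is computed modulo 2 and then lifted to Z_4. -/
open Finset

/-- The quadratic form q : F_2^n → Z_4. -/
def quadForm {n : ℕ} (A : Fin n → Fin n → ZMod 2) (b : Fin n → ZMod 2)
    (x : Fin n → ZMod 2) : ZMod 4 :=
  2 * ∑ p ∈ Finset.univ.filter (fun p : Fin n × Fin n => p.1 < p.2),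
      ((A p.1 p.2).val : ZMod 4) * ((x p.1).val : ZMod 4) * ((x p.2).val : ZMod 4)
  + ∑ α : Fin n, ((b α).val : ZMod 4) * ((x α).val : ZMod 4)

/-- The set L_q. -/
def Lset {n : ℕ} (A : Fin n → Fin n → ZMod 2) (b : Fin n → ZMod 2) :
    Set (Fin n → ZMod 2) :=
  {x | ∀ y, quadForm A b (x + y) = quadForm A b x + quadForm A b y}

/-- F_2 inner product. -/
def ip {n : ℕ} (z x : Fin n → ZMod 2) : ZMod 2 := ∑ α, z α * x α

/-!
The set `L` of points at which a map `q : V → ℤ/4` with `q 0 = 0` is additive is an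
`𝔽₂`-subspace of `V`, and since `x + x = 0` in `V`, additivity at `x` gives
`2 q(x) = q(0) = 0`, so `q` takes values in `{0, 2} ≅ 𝔽₂` on `L`. Halving therefore turns
`q|_L` into a linear functional on `L`; extend it to all of `V` and read off its coefficient
vector `z`.
-/

def ZMod.halve (a : ZMod 4) : ZMod 2 := if a = 2 then 1 else 0

lemma ZMod.two_mul_halve {a : ZMod 4} (ha : a + a = 0) :
    2 * ((ZMod.halve a).val : ZMod 4) = a := by
  revert a; decide

lemma ZMod.halve_add {a c : ZMod 4} (ha : a + a = 0) (hc : c + c = 0) :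
    ZMod.halve (a + c) = ZMod.halve a + ZMod.halve c := by
  revert a c; decide

section LinearLocus

variable {V : Type*} [AddCommGroup V] [Module (ZMod 2) V] (q : V → ZMod 4) (hq : q 0 = 0)

def linearLocus : Submodule (ZMod 2) V :=
  AddSubgroup.toZModSubmodule 2
    { carrier := {x | ∀ y, q (x + y) = q x + q y}
      add_mem' := fun {x x'} hx hx' y => by rw [add_assoc, hx, hx', hx, add_assoc]
      zero_mem' := fun y => by rw [zero_add, hq, zero_add]
      neg_mem' := fun {x} hx => by rwa [Set.mem_ofPred_eq, ZModModule.neg_eq_self] }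

variable {q hq}

lemma mem_linearLocus {x : V} : x ∈ linearLocus q hq ↔ ∀ y, q (x + y) = q x + q y := Iff.rfl

lemma add_self_eq_zero_of_mem_linearLocus {x : V} (hx : x ∈ linearLocus q hq) :
    q x + q x = 0 := by
  rw [← mem_linearLocus.mp hx x, ZModModule.add_self, hq]

variable (q hq)

def halfOnLinearLocus : linearLocus q hq →ₗ[ZMod 2] ZMod 2 :=
  AddMonoidHom.toZModLinearMap 2 <|
    AddMonoidHom.mk' (fun x => ZMod.halve (q x)) fun x y => by
      rw [Submodule.coe_add, mem_linearLocus.mp x.2,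
        ZMod.halve_add (add_self_eq_zero_of_mem_linearLocus x.2)
          (add_self_eq_zero_of_mem_linearLocus y.2)]

theorem exists_linearMap_two_mul_eq_on_linearLocus :
    ∃ g : V →ₗ[ZMod 2] ZMod 2,
      ∀ x ∈ linearLocus q hq, 2 * ((g x).val : ZMod 4) = q x := by
  obtain ⟨g, hg⟩ := LinearMap.exists_extend (halfOnLinearLocus q hq)
  refine ⟨g, fun x hx => ?_⟩
  have hgx : g x = ZMod.halve (q x) := LinearMap.congr_fun hg ⟨x, hx⟩
  rw [hgx, ZMod.two_mul_halve (add_self_eq_zero_of_mem_linearLocus hx)]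

end LinearLocus

lemma quadForm_zero {n : ℕ} (A : Fin n → Fin n → ZMod 2) (b : Fin n → ZMod 2) :
    quadForm A b 0 = 0 := by
  simp [quadForm]

lemma ip_eq_apply {n : ℕ} (g : (Fin n → ZMod 2) →ₗ[ZMod 2] ZMod 2) (x : Fin n → ZMod 2) :
    ip (fun α => g (Pi.single α 1)) x = g x := by
  rw [ip, LinearMap.pi_apply_eq_sum_univ g x]
  refine Finset.sum_congr rfl fun α _ => ?_
  rw [smul_eq_mul, mul_comm]
  congr 2
  ext j
  simp [Pi.single_apply, eq_comm]

theorem exists_hidden_linear_function_general (n : ℕ)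
    (A : Fin n → Fin n → ZMod 2) (b : Fin n → ZMod 2) :
    ∃ z : Fin n → ZMod 2, ∀ x ∈ Lset A b,
      quadForm A b x = 2 * ((ip z x).val : ZMod 4) := by
  obtain ⟨g, hg⟩ :=
    exists_linearMap_two_mul_eq_on_linearLocus (quadForm A b) (quadForm_zero A b)
  exact ⟨fun α => g (Pi.single α 1), fun x hx => by rw [ip_eq_apply, hg x hx]⟩

/-- There exists z ∈ F_2^n with q(x) = 2·(z^T x) for all x ∈ L_q,
the inner product being computed mod 2 and then lifted to Z_4. -/
theorem exists_hidden_linear_function (n : ℕ) (hn : 1 ≤ n)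
    (A : Fin n → Fin n → ZMod 2) (b : Fin n → ZMod 2) :
    ∃ z : Fin n → ZMod 2, ∀ x ∈ Lset A b,
      quadForm A b x = 2 * ((ip z x).val : ZMod 4) :=
  exists_hidden_linear_function_general n A b
end

section
/- If K ⊆ F_2^n is a linear subspace with L_q + K = F_2^n and L_q ∩ K = {0}, then |Γ(K, z)|^2 = 2^n / |L_q| for every z ∈ F_2^n. -/
open Finset

/-- The partial Fourier transform Γ(L, z). -/
noncomputable def Gamma {n : ℕ} (A : Fin n → Fin n → ZMod 2) (b : Fin n → ZMod 2)
    (L : Set (Fin n → ZMod 2)) (z : Fin n → ZMod 2) : ℂ :=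
  ∑ x ∈ (Set.toFinite L).toFinset,
    (-1 : ℂ) ^ (ip z x).val * Complex.I ^ (quadForm A b x).val

/-!
Over `F_2` the form satisfies `q (x + y) = q x + q y + 2 B(x, y)` for the symmetric bilinear polar
form `B`, so `L_q` is the radical of `B`. Expanding `|Γ(K, z)|² = ∑_{x, y ∈ K} f x * conj (f y)` for
the summand `f` of `Γ` and substituting `x = w + y` gives `∑_{w ∈ K} f w ∑_{y ∈ K} (-1)^B(w, y)`.
As `K` is a complement of the radical, `B` is nondegenerate on `K`, so the inner character sum
vanishes unless `w = 0`. Hence `|Γ(K, z)|² = |K| = 2^n / |L_q|`.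
-/

theorem Submodule.isCompl_of_exists_add_of_inter_eq {R M : Type*} [Semiring R] [AddCommMonoid M]
    [Module R M] {p q : Submodule R M} (hsum : ∀ v, ∃ x ∈ p, ∃ y ∈ q, v = x + y)
    (hinter : (p : Set M) ∩ q = {0}) : IsCompl p q where
  disjoint := Submodule.disjoint_def.2 fun _ hp hq => hinter.subset ⟨hp, hq⟩
  codisjoint := codisjoint_iff.2 <| Submodule.eq_top_iff'.2 fun v => by
    obtain ⟨x, hx, y, hy, rfl⟩ := hsum v
    exact Submodule.add_mem_sup hx hy

theorem Submodule.card_mul_card_of_isCompl {R M : Type*} [Ring R] [AddCommGroup M] [Module R M]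
    {p q : Submodule R M} (h : IsCompl p q) : Nat.card p * Nat.card q = Nat.card M := by
  rw [← Nat.card_prod]
  exact Nat.card_congr (Submodule.prodEquivOfIsCompl p q h).toEquiv

lemma norm_sum_sq_eq_sum_sum_add_mul_conj {G : Type*} [AddGroup G] [Fintype G] (f : G → ℂ) :
    (‖∑ x, f x‖ ^ 2 : ℂ) = ∑ w, ∑ y, f (w + y) * starRingEnd ℂ (f y) := by
  rw [← Complex.mul_conj', map_sum, sum_mul_sum, sum_comm]
  conv_rhs => rw [sum_comm]
  exact sum_congr rfl fun y _ => (Fintype.sum_equiv (Equiv.addRight y) _ _ fun _ => rfl).symm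

noncomputable def signChar : AddChar (ZMod 2) ℂ := AddChar.zmodChar 2 neg_one_sq

noncomputable def iChar : AddChar (ZMod 4) ℂ := AddChar.zmodChar 4 Complex.I_pow_four

lemma signChar_apply (c : ZMod 2) : signChar c = (-1) ^ c.val := AddChar.zmodChar_apply _ _

lemma iChar_apply (u : ZMod 4) : iChar u = Complex.I ^ u.val := AddChar.zmodChar_apply _ _

lemma signChar_eq_one_iff (c : ZMod 2) : signChar c = 1 ↔ c = 0 := by
  rw [signChar_apply]
  obtain rfl | rfl : c = 0 ∨ c = 1 := by revert c; decide
  · simp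
  · norm_num [ZMod.val_one]

def twoMulVal : ZMod 2 →+ ZMod 4 where
  toFun a := 2 * (a.val : ZMod 4)
  map_zero' := by decide
  map_add' := by decide

lemma iChar_twoMulVal (c : ZMod 2) : iChar (twoMulVal c) = signChar c := by
  have hval : (twoMulVal c).val = 2 * c.val := by fin_cases c <;> rfl
  rw [iChar_apply, signChar_apply, hval, pow_mul, Complex.I_sq]

lemma sum_signChar_eq_ite {V : Type*} [AddCommGroup V] [Module (ZMod 2) V] [Fintype V]
    [DecidableEq V] {B : LinearMap.BilinForm (ZMod 2) V} (hB : B.SeparatingLeft) (w : V) :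
    ∑ y, signChar (B w y) = if w = 0 then (Nat.card V : ℂ) else 0 := by
  let ψ := signChar.compAddMonoidHom (B w).toAddMonoidHom
  have hψ : ψ = 0 ↔ w = 0 := by
    simp only [AddChar.eq_zero_iff, ψ, AddChar.compAddMonoidHom_apply,
      LinearMap.toAddMonoidHom_coe, signChar_eq_one_iff]
    exact ⟨hB w, by rintro rfl y; simp⟩
  classical
  exact ψ.sum_eq_ite.trans (by simp only [hψ, Nat.card_eq_fintype_card])

section QuadraticForm

variable {n : ℕ} (A : Fin n → Fin n → ZMod 2) (b : Fin n → ZMod 2)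

def polarForm : LinearMap.BilinForm (ZMod 2) (Fin n → ZMod 2) :=
  LinearMap.mk₂ (ZMod 2)
    (fun x y => ∑ p ∈ univ.filter (fun p : Fin n × Fin n => p.1 < p.2),
        A p.1 p.2 * (x p.1 * y p.2 + x p.2 * y p.1) + ∑ α, b α * x α * y α)
    (fun x x' y => by
      simp only [Pi.add_apply]
      rw [add_add_add_comm, ← sum_add_distrib, ← sum_add_distrib]
      congr 1 <;> exact sum_congr rfl fun _ _ => by ring)
    (fun c x y => by
      simp only [Pi.smul_apply, smul_eq_mul, mul_add, mul_sum]
      congr 1 <;> exact sum_congr rfl fun _ _ => by ring)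
    (fun x y y' => by
      simp only [Pi.add_apply]
      rw [add_add_add_comm, ← sum_add_distrib, ← sum_add_distrib]
      congr 1 <;> exact sum_congr rfl fun _ _ => by ring)
    (fun c x y => by
      simp only [Pi.smul_apply, smul_eq_mul, mul_add, mul_sum]
      congr 1 <;> exact sum_congr rfl fun _ _ => by ring)

lemma polarForm_apply (x y : Fin n → ZMod 2) :
    polarForm A b x y = ∑ p ∈ univ.filter (fun p : Fin n × Fin n => p.1 < p.2),
        A p.1 p.2 * (x p.1 * y p.2 + x p.2 * y p.1) + ∑ α, b α * x α * y α := rfl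

lemma polarForm_isSymm : LinearMap.IsSymm (polarForm A b) := by
  refine LinearMap.isSymm_def.2 fun x y => ?_
  simp only [RingHom.id_apply, polarForm_apply]
  congr 1 <;> exact sum_congr rfl fun _ _ => by ring

lemma quadForm_add (x y : Fin n → ZMod 2) :
    quadForm A b (x + y) = quadForm A b x + quadForm A b y + twoMulVal (polarForm A b x y) := by
  have hquad : ∀ a x₁ x₂ y₁ y₂ : ZMod 2,
      2 * ((a.val : ZMod 4) * ((x₁ + y₁).val : ZMod 4) * ((x₂ + y₂).val : ZMod 4))
        = 2 * ((a.val : ZMod 4) * (x₁.val : ZMod 4) * (x₂.val : ZMod 4))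
          + 2 * ((a.val : ZMod 4) * (y₁.val : ZMod 4) * (y₂.val : ZMod 4))
          + twoMulVal (a * (x₁ * y₂ + x₂ * y₁)) := by decide
  have hlin : ∀ c x₁ y₁ : ZMod 2,
      (c.val : ZMod 4) * ((x₁ + y₁).val : ZMod 4)
        = (c.val : ZMod 4) * (x₁.val : ZMod 4) + (c.val : ZMod 4) * (y₁.val : ZMod 4)
          + twoMulVal (c * x₁ * y₁) := by decide
  simp only [quadForm, polarForm_apply, map_add, map_sum, Pi.add_apply, mul_sum]
  rw [sum_congr rfl fun p _ => hquad _ _ _ _ _, sum_congr rfl fun α _ => hlin _ _ _]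
  simp only [sum_add_distrib]
  ring

lemma Lset_eq_ker : Lset A b = LinearMap.ker (polarForm A b) := by
  have htwo : ∀ c : ZMod 2, twoMulVal c = 0 ↔ c = 0 := by decide
  ext x
  simp only [Lset, Set.mem_ofPred_eq, quadForm_add, add_eq_left, htwo, SetLike.mem_coe,
    LinearMap.mem_ker, LinearMap.ext_iff, LinearMap.zero_apply]

noncomputable def gammaTerm (z x : Fin n → ZMod 2) : ℂ :=
  signChar (z ⬝ᵥ x) * iChar (quadForm A b x)

lemma Gamma_eq_sum_gammaTerm (K : Submodule (ZMod 2) (Fin n → ZMod 2)) [Fintype K]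
    (z : Fin n → ZMod 2) : Gamma A b K z = ∑ x : K, gammaTerm A b z x := by
  rw [Gamma, Finset.sum_subtype _ fun x => Set.Finite.mem_toFinset _]
  rfl

lemma gammaTerm_zero (z : Fin n → ZMod 2) : gammaTerm A b z 0 = 1 := by
  simp [gammaTerm, quadForm]

lemma gammaTerm_add_mul_conj (z w y : Fin n → ZMod 2) :
    gammaTerm A b z (w + y) * starRingEnd ℂ (gammaTerm A b z y)
      = gammaTerm A b z w * signChar (polarForm A b w y) := by
  calc gammaTerm A b z (w + y) * starRingEnd ℂ (gammaTerm A b z y)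
      = signChar (z ⬝ᵥ (w + y) + -(z ⬝ᵥ y)) * iChar (quadForm A b (w + y) + -quadForm A b y) := by
        simp only [gammaTerm, map_mul, ← AddChar.map_neg_eq_conj, AddChar.map_add_eq_mul]
        ring
    _ = signChar (z ⬝ᵥ w) * iChar (quadForm A b w + twoMulVal (polarForm A b w y)) := by
        rw [dotProduct_add, quadForm_add, add_neg_cancel_right, add_right_comm,
          add_neg_cancel_right]
    _ = gammaTerm A b z w * signChar (polarForm A b w y) := by
        rw [AddChar.map_add_eq_mul, iChar_twoMulVal, gammaTerm, mul_assoc]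

end QuadraticForm

theorem abs_sq_Gamma_K_general (n : ℕ)
    (A : Fin n → Fin n → ZMod 2) (b : Fin n → ZMod 2)
    (K : Submodule (ZMod 2) (Fin n → ZMod 2))
    (hsum : ∀ v : Fin n → ZMod 2, ∃ x ∈ Lset A b, ∃ y ∈ K, v = x + y)
    (hint : Lset A b ∩ (K : Set (Fin n → ZMod 2)) = {0})
    (z : Fin n → ZMod 2) :
    (‖Gamma A b (K : Set (Fin n → ZMod 2)) z‖) ^ 2
      = 2 ^ n / (Nat.card ↥(Lset A b) : ℝ) := by
  classical
  rw [Lset_eq_ker] at hsum hint ⊢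
  have hcompl := Submodule.isCompl_of_exists_add_of_inter_eq hsum hint
  have hnondeg := (polarForm_isSymm A b).nondegenerate_restrict_of_isCompl_ker hcompl.symm
  have hchar (w : K) :
      ∑ y : K, signChar (polarForm A b w y) = if w = 0 then (Nat.card K : ℂ) else 0 :=
    sum_signChar_eq_ite hnondeg.1 w
  have hnorm : ‖Gamma A b K z‖ ^ 2 = Nat.card K := by
    suffices (‖Gamma A b K z‖ ^ 2 : ℂ) = Nat.card K by exact_mod_cast this
    rw [Gamma_eq_sum_gammaTerm, norm_sum_sq_eq_sum_sum_add_mul_conj]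
    simp_rw [Submodule.coe_add, gammaTerm_add_mul_conj, ← mul_sum, hchar]
    simp [gammaTerm_zero]
  have hcard := Submodule.card_mul_card_of_isCompl hcompl
  rw [Nat.card_fun, Nat.card_zmod, Nat.card_fin] at hcard
  rw [eq_div_iff (Nat.cast_ne_zero.2 Nat.card_pos.ne'), hnorm, mul_comm]
  exact_mod_cast hcard

/-- If K is a linear subspace with L_q + K = F_2^n and
L_q ∩ K = {0}, then |Γ(K, z)|² = 2^n / |L_q| for every z. -/
theorem abs_sq_Gamma_K (n : ℕ) (hn : 1 ≤ n)
    (A : Fin n → Fin n → ZMod 2) (b : Fin n → ZMod 2)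
    (K : Submodule (ZMod 2) (Fin n → ZMod 2))
    (hsum : ∀ v : Fin n → ZMod 2, ∃ x ∈ Lset A b, ∃ y ∈ K, v = x + y)
    (hint : Lset A b ∩ (K : Set (Fin n → ZMod 2)) = {0})
    (z : Fin n → ZMod 2) :
    (‖Gamma A b (K : Set (Fin n → ZMod 2)) z‖) ^ 2
      = 2 ^ n / (Nat.card ↥(Lset A b) : ℝ) :=
  abs_sq_Gamma_K_general n A b K hsum hint z
end

section
/- Suppose e, f, g, h : F_2^3 → F_2 are affine boolean functions of x = (x_1, x_2, x_3) such that f does not depend on x_1, g does not depend on x_2, h does not depend on x_3, and f(x) ⊕ g(x) ⊕ h(x) is independent of x. Then the real number Σ_{x ∈ F_2^3, x_1 ⊕ x_2 ⊕ x_3 = 0} i^{x_1+x_2+x_3} · (−1)^{e(x) + f(x)·x_1 + g(x)·x_2 + h(x)·x_3} is at most 2. (Here the exponent of −1 is evaluated in F_2, the bits x_j in the exponent of i are lifted to integers, and since x_1+x_2+x_3 is even on the summation domain each summand equals ±1, so the sum is a real number.) -/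
open Finset

/-- A function F_2^3 → F_2 is affine if it is a constant plus a linear form. -/
def IsAffine (p : (Fin 3 → ZMod 2) → ZMod 2) : Prop :=
  ∃ (c₀ : ZMod 2) (c : Fin 3 → ZMod 2), ∀ x, p x = c₀ + ∑ i, c i * x i

/-- p does not depend on the j-th input bit. -/
def NotDependsOn (p : (Fin 3 → ZMod 2) → ZMod 2) (j : Fin 3) : Prop :=
  ∀ x, p (x + Pi.single j 1) = p x

/-!
On the even-weight plane `{000, 110, 101, 011}` the factor `i^{x₁+x₂+x₃}` is `+1` at `000` and
`-1` elsewhere, so the sum is the real number `ε₀ - ε₁ - ε₂ - ε₃` of four signs `εₓ = (-1)^{q(x)}`,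
`q(x) = e(x) + f(x)x₁ + g(x)x₂ + h(x)x₃`. It could exceed `2` only as `1 + 1 + 1 + 1`, which needs
`Σₓ q(x) = 1`. But an affine `e` sums to zero over a plane, and the quadratic terms add up to
`(f + g + h)(110) + (f + g + h)(101) + (f + g + h)(011) + (f + g + h)(111) = 0`, after moving
`h(110), g(101), f(011)` to the point `111` along the bit each of them ignores.
-/

def phase (e f g h : (Fin 3 → ZMod 2) → ZMod 2) (x : Fin 3 → ZMod 2) : ZMod 2 :=
  e x + f x * x 0 + g x * x 1 + h x * x 2

theorem IsAffine.add_add_add_eq_zero {p : (Fin 3 → ZMod 2) → ZMod 2} (hp : IsAffine p)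
    (u v : Fin 3 → ZMod 2) : p 0 + p u + p v + p (u + v) = 0 := by
  obtain ⟨c₀, c, hc⟩ := hp
  simp only [hc, Pi.add_apply, Pi.zero_apply, mul_zero, sum_const_zero, mul_add, sum_add_distrib]
  grind

theorem phase_sum_even_weight_eq_zero (e f g h : (Fin 3 → ZMod 2) → ZMod 2) (he : IsAffine e)
    (hf1 : NotDependsOn f 0) (hg2 : NotDependsOn g 1) (hh3 : NotDependsOn h 2)
    (hfgh : ∀ x y, f x + g x + h x = f y + g y + h y) :
    phase e f g h ![0, 0, 0] + phase e f g h ![1, 1, 0] + phase e f g h ![1, 0, 1] +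
      phase e f g h ![0, 1, 1] = 0 := by
  have he_plane := he.add_add_add_eq_zero ![1, 1, 0] ![1, 0, 1]
  rw [show (0 : Fin 3 → ZMod 2) = ![0, 0, 0] by decide,
    show (![1, 1, 0] + ![1, 0, 1] : Fin 3 → ZMod 2) = ![0, 1, 1] by decide] at he_plane
  have hf : f ![1, 1, 1] = f ![0, 1, 1] := (congrArg f (by decide)).trans (hf1 _)
  have hg : g ![1, 1, 1] = g ![1, 0, 1] := (congrArg g (by decide)).trans (hg2 _)
  have hh : h ![1, 1, 1] = h ![1, 1, 0] := (congrArg h (by decide)).trans (hh3 _)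
  have h₁ := hfgh ![1, 1, 0] ![1, 1, 1]
  have h₂ := hfgh ![1, 0, 1] ![1, 1, 1]
  have h₃ := hfgh ![0, 1, 1] ![1, 1, 1]
  simp only [phase, Matrix.cons_val_zero, Matrix.cons_val_one, Matrix.cons_val_two,
    Matrix.head_cons, Matrix.tail_cons]
  grind

theorem sum_even_weight_eq (φ : (Fin 3 → ZMod 2) → ZMod 2) :
    ∑ x ∈ univ.filter (fun x : Fin 3 → ZMod 2 => x 0 + x 1 + x 2 = 0),
        Complex.I ^ ((x 0).val + (x 1).val + (x 2).val) * (-1 : ℂ) ^ (φ x).val =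
      (((-1 : ℝ) ^ (φ ![0, 0, 0]).val - (-1) ^ (φ ![1, 1, 0]).val - (-1) ^ (φ ![1, 0, 1]).val -
        (-1) ^ (φ ![0, 1, 1]).val : ℝ) : ℂ) := by
  have hplane : univ.filter (fun x : Fin 3 → ZMod 2 => x 0 + x 1 + x 2 = 0) =
      {![0, 0, 0], ![1, 1, 0], ![1, 0, 1], ![0, 1, 1]} := by decide
  rw [hplane, sum_insert (by decide), sum_insert (by decide), sum_insert (by decide),
    sum_singleton]
  norm_num [ZMod.val_one, Complex.I_sq, Matrix.cons_val_two, Matrix.tail_cons, Matrix.head_cons]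
  ring

theorem neg_one_pow_val_sub_sub_sub_le_two {a b c d : ZMod 2} (h : a + b + c + d = 0) :
    (-1 : ℝ) ^ a.val - (-1) ^ b.val - (-1) ^ c.val - (-1) ^ d.val ≤ 2 := by
  fin_cases a <;> fin_cases b <;> fin_cases c <;> fin_cases d <;>
    first
      | exact absurd h (by decide)
      | norm_num [ZMod.val]

theorem affine_sum_le_two_general (e f g h : (Fin 3 → ZMod 2) → ZMod 2)
    (he : IsAffine e)
    (hf1 : NotDependsOn f 0) (hg2 : NotDependsOn g 1) (hh3 : NotDependsOn h 2)
    (hfgh : ∀ x y, f x + g x + h x = f y + g y + h y) :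
    (∑ x ∈ Finset.univ.filter (fun x : Fin 3 → ZMod 2 => x 0 + x 1 + x 2 = 0),
        Complex.I ^ ((x 0).val + (x 1).val + (x 2).val) *
          (-1 : ℂ) ^ (e x + f x * x 0 + g x * x 1 + h x * x 2).val).im = 0 ∧
    (∑ x ∈ Finset.univ.filter (fun x : Fin 3 → ZMod 2 => x 0 + x 1 + x 2 = 0),
        Complex.I ^ ((x 0).val + (x 1).val + (x 2).val) *
          (-1 : ℂ) ^ (e x + f x * x 0 + g x * x 1 + h x * x 2).val).re ≤ 2 := by
  rw [sum_even_weight_eq, Complex.ofReal_im, Complex.ofReal_re]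
  exact ⟨rfl, neg_one_pow_val_sub_sub_sub_le_two
    (phase_sum_even_weight_eq_zero e f g h he hf1 hg2 hh3 hfgh)⟩

/-- With e, f, g, h affine, f independent of x₁, g of x₂, h of x₃,
and f ⊕ g ⊕ h constant, the sum
Σ_{x₁⊕x₂⊕x₃=0} i^{x₁+x₂+x₃}·(−1)^{e(x)+f(x)x₁+g(x)x₂+h(x)x₃}
is a real number at most 2. -/
theorem affine_sum_le_two (e f g h : (Fin 3 → ZMod 2) → ZMod 2)
    (he : IsAffine e) (hf : IsAffine f) (hg : IsAffine g) (hh : IsAffine h)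
    (hf1 : NotDependsOn f 0) (hg2 : NotDependsOn g 1) (hh3 : NotDependsOn h 2)
    (hfgh : ∀ x y, f x + g x + h x = f y + g y + h y) :
    (∑ x ∈ Finset.univ.filter (fun x : Fin 3 → ZMod 2 => x 0 + x 1 + x 2 = 0),
        Complex.I ^ ((x 0).val + (x 1).val + (x 2).val) *
          (-1 : ℂ) ^ (e x + f x * x 0 + g x * x 1 + h x * x 2).val).im = 0 ∧
    (∑ x ∈ Finset.univ.filter (fun x : Fin 3 → ZMod 2 => x 0 + x 1 + x 2 = 0),
        Complex.I ^ ((x 0).val + (x 1).val + (x 2).val) *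
          (-1 : ℂ) ^ (e x + f x * x 0 + g x * x 1 + h x * x 2).val).re ≤ 2 :=
  affine_sum_le_two_general e f g h he hf1 hg2 hh3 hfgh
end
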